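/- arXiv:2508.01606 — 5 statements merged into one kernel-verified Lean document; each statement's English description precedes it below -/
import Mathlib

section
/- The set Orn(D) of ornamentations of a directed graph D, ordered by componentwise inclusion (O₁ ≤ O₂ iff O₁(v) ⊆ O₂(v) for all v), forms a lattice. The meet of O₁ and O₂ sends v to the inclusion-maximal ornament at v contained in O₁(v) ∩ O₂(v), and the join sends v to the inclusion-minimal subset U of V containing v such that u ∈ U implies O₁(u) ∪ O₂(u) ⊆ U. -/
/-- A directed path from `u` to `v` in the digraph `D` using only vertices of `U`. -/
def pathIn {V : Type*} (D : V → V → Prop) (U : Set V) (u v : V) : Prop :=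
  Relation.ReflTransGen (fun a b => D a b ∧ a ∈ U ∧ b ∈ U) u v

/-- An ornament of `D` at `v`. -/
def IsOrnament {V : Type*} (D : V → V → Prop) (v : V) (U : Set V) : Prop :=
  v ∈ U ∧ ∀ u ∈ U, pathIn D U u v

/-- An ornamentation of `D`: each vertex gets an ornament, with the nesting condition. -/
def IsOrnamentation {V : Type*} (D : V → V → Prop) (O : V → Set V) : Prop :=
  (∀ v, IsOrnament D v (O v)) ∧ ∀ u v, u ∈ O v → O u ⊆ O v

/-- The inclusion maximal ornament of `D` at `v` contained in `X`
(the union of all such ornaments). -/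
def maxOrnIn {V : Type*} (D : V → V → Prop) (v : V) (X : Set V) : Set V :=
  ⋃₀ {U | IsOrnament D v U ∧ U ⊆ X}

/-- The join of two ornamentations: `v` is sent to the inclusion minimal set `U`
containing `v` such that `u ∈ U` implies `O₁ u ∪ O₂ u ⊆ U`. -/
def ornJoin {V : Type*} (D : V → V → Prop) (O₁ O₂ : V → Set V) (v : V) : Set V :=
  ⋂₀ {U | v ∈ U ∧ ∀ u ∈ U, O₁ u ∪ O₂ u ⊆ U}

/-!
Ornaments at `v` inside a set `X` are closed under arbitrary unions, so `maxOrnIn D v X` is the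
largest of them. When `X` is nested like an ornamentation and `u ∈ maxOrnIn D v (X v)`, the set
`maxOrnIn D u (X u) ∪ maxOrnIn D v (X v)` is again an ornament at `v` inside `X v`, which gives the
nesting condition for the meet.

The join at `v` is the closure of `{v}` under `u ↦ O₁ u ∪ O₂ u`. Each newly added vertex `w` lies
in an ornament `Oᵢ u` with `u` already in the closure, so a path from `w` to `u` inside `Oᵢ u`
extends a path from `u` to `v`; minimality of the closure gives nesting and the least upper bound.
-/

section Ornaments

variable {V : Type*} {D : V → V → Prop}

lemma pathIn_mono {U W : Set V} (hUW : U ⊆ W) {u v : V} (h : pathIn D U u v) :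
    pathIn D W u v :=
  Relation.ReflTransGen.mono (fun _ _ hab => ⟨hab.1, hUW hab.2.1, hUW hab.2.2⟩) _ _ h

lemma isOrnament_singleton (v : V) : IsOrnament D v {v} :=
  ⟨rfl, fun _ hu => hu ▸ Relation.ReflTransGen.refl⟩

lemma IsOrnament.union {u v : V} {U W : Set V} (hU : IsOrnament D u U) (hW : IsOrnament D v W)
    (hu : u ∈ W) : IsOrnament D v (U ∪ W) := by
  refine ⟨Or.inr hW.1, ?_⟩
  rintro w (hw | hw)
  · exact (pathIn_mono Set.subset_union_left (hU.2 w hw)).trans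
      (pathIn_mono Set.subset_union_right (hW.2 u hu))
  · exact pathIn_mono Set.subset_union_right (hW.2 w hw)

lemma maxOrnIn_subset (v : V) (X : Set V) : maxOrnIn D v X ⊆ X :=
  Set.sUnion_subset fun _ hU => hU.2

lemma subset_maxOrnIn {v : V} {U X : Set V} (hU : IsOrnament D v U) (hUX : U ⊆ X) :
    U ⊆ maxOrnIn D v X :=
  Set.subset_sUnion_of_mem ⟨hU, hUX⟩

lemma isOrnament_maxOrnIn {v : V} {X : Set V} (hv : v ∈ X) :
    IsOrnament D v (maxOrnIn D v X) := by
  refine ⟨subset_maxOrnIn (isOrnament_singleton v) (Set.singleton_subset_iff.2 hv) rfl, ?_⟩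
  rintro u ⟨U, ⟨hU, hUX⟩, huU⟩
  exact pathIn_mono (subset_maxOrnIn hU hUX) (hU.2 u huU)

lemma isOrnamentation_maxOrnIn {X : V → Set V} (hmem : ∀ v, v ∈ X v)
    (hnest : ∀ u v, u ∈ X v → X u ⊆ X v) :
    IsOrnamentation D (fun v => maxOrnIn D v (X v)) := by
  refine ⟨fun v => isOrnament_maxOrnIn (hmem v), fun u v huv => ?_⟩
  have huX : u ∈ X v := maxOrnIn_subset v (X v) huv
  have horn := (isOrnament_maxOrnIn (D := D) (hmem u)).union (isOrnament_maxOrnIn (hmem v)) huv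
  have hsub : maxOrnIn D u (X u) ∪ maxOrnIn D v (X v) ⊆ X v :=
    Set.union_subset ((maxOrnIn_subset u _).trans (hnest u v huX)) (maxOrnIn_subset v _)
  exact Set.subset_union_left.trans (subset_maxOrnIn horn hsub)

variable (D) {O₁ O₂ : V → Set V}

lemma mem_ornJoin_self (v : V) : v ∈ ornJoin D O₁ O₂ v :=
  Set.mem_sInter.2 fun _ hU => hU.1

lemma union_subset_ornJoin {u v : V} (hu : u ∈ ornJoin D O₁ O₂ v) :
    O₁ u ∪ O₂ u ⊆ ornJoin D O₁ O₂ v :=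
  Set.subset_sInter fun U hU => hU.2 u (Set.mem_sInter.1 hu U hU)

lemma ornJoin_subset_of_closed {v : V} {U : Set V} (hv : v ∈ U)
    (hU : ∀ u ∈ U, O₁ u ∪ O₂ u ⊆ U) : ornJoin D O₁ O₂ v ⊆ U :=
  Set.sInter_subset_of_mem ⟨hv, hU⟩

lemma ornJoin_subset_ornJoin {u v : V} (hu : u ∈ ornJoin D O₁ O₂ v) :
    ornJoin D O₁ O₂ u ⊆ ornJoin D O₁ O₂ v :=
  ornJoin_subset_of_closed D hu fun _ hw => union_subset_ornJoin D hw

lemma isOrnament_ornJoin (h₁ : ∀ v, IsOrnament D v (O₁ v)) (h₂ : ∀ v, IsOrnament D v (O₂ v))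
    (v : V) : IsOrnament D v (ornJoin D O₁ O₂ v) := by
  set J := ornJoin D O₁ O₂ v
  refine ⟨mem_ornJoin_self D v, fun u hu => ?_⟩
  suffices J ⊆ {u | u ∈ J ∧ pathIn D J u v} from (this hu).2
  refine ornJoin_subset_of_closed D ⟨mem_ornJoin_self D v, .refl⟩ ?_
  rintro u ⟨huJ, hpath⟩ w hw
  have hsub := union_subset_ornJoin D huJ
  refine ⟨hsub hw, ?_⟩
  rcases hw with hw | hw
  · exact (pathIn_mono (Set.union_subset_iff.1 hsub).1 ((h₁ u).2 w hw)).trans hpath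
  · exact (pathIn_mono (Set.union_subset_iff.1 hsub).2 ((h₂ u).2 w hw)).trans hpath

lemma isOrnamentation_ornJoin (h₁ : IsOrnamentation D O₁) (h₂ : IsOrnamentation D O₂) :
    IsOrnamentation D (ornJoin D O₁ O₂) :=
  ⟨isOrnament_ornJoin D h₁.1 h₂.1, fun _ _ => ornJoin_subset_ornJoin D⟩

lemma union_subset_ornJoin_self (v : V) : O₁ v ∪ O₂ v ⊆ ornJoin D O₁ O₂ v :=
  union_subset_ornJoin D (mem_ornJoin_self D v)

lemma ornJoin_subset {O : V → Set V} (hO : IsOrnamentation D O) (h₁ : ∀ v, O₁ v ⊆ O v)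
    (h₂ : ∀ v, O₂ v ⊆ O v) (v : V) : ornJoin D O₁ O₂ v ⊆ O v :=
  ornJoin_subset_of_closed D (hO.1 v).1 fun u hu =>
    Set.union_subset ((h₁ u).trans (hO.2 u v hu)) ((h₂ u).trans (hO.2 u v hu))

end Ornaments

/-- Ornamentations of `D`, ordered componentwise by inclusion, form a lattice, with the
described meet (pointwise maximal ornament inside the intersection) and join. -/
theorem ornamentation_lattice {V : Type*} (D : V → V → Prop) (O₁ O₂ : V → Set V)
    (h₁ : IsOrnamentation D O₁) (h₂ : IsOrnamentation D O₂) :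
    IsOrnamentation D (fun v => maxOrnIn D v (O₁ v ∩ O₂ v)) ∧
    (∀ v, maxOrnIn D v (O₁ v ∩ O₂ v) ⊆ O₁ v) ∧
    (∀ v, maxOrnIn D v (O₁ v ∩ O₂ v) ⊆ O₂ v) ∧
    (∀ O : V → Set V, IsOrnamentation D O → (∀ v, O v ⊆ O₁ v) → (∀ v, O v ⊆ O₂ v) →
      ∀ v, O v ⊆ maxOrnIn D v (O₁ v ∩ O₂ v)) ∧
    IsOrnamentation D (ornJoin D O₁ O₂) ∧
    (∀ v, O₁ v ⊆ ornJoin D O₁ O₂ v) ∧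
    (∀ v, O₂ v ⊆ ornJoin D O₁ O₂ v) ∧
    (∀ O : V → Set V, IsOrnamentation D O → (∀ v, O₁ v ⊆ O v) → (∀ v, O₂ v ⊆ O v) →
      ∀ v, ornJoin D O₁ O₂ v ⊆ O v) := by
  have hmeet : IsOrnamentation D (fun v => maxOrnIn D v (O₁ v ∩ O₂ v)) :=
    isOrnamentation_maxOrnIn (fun v => ⟨(h₁.1 v).1, (h₂.1 v).1⟩)
      fun u v hu => Set.inter_subset_inter (h₁.2 u v hu.1) (h₂.2 u v hu.2)
  exact ⟨hmeet,
    fun v => (maxOrnIn_subset v _).trans Set.inter_subset_left,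
    fun v => (maxOrnIn_subset v _).trans Set.inter_subset_right,
    fun O hO hO₁ hO₂ v => subset_maxOrnIn (hO.1 v) (Set.subset_inter (hO₁ v) (hO₂ v)),
    isOrnamentation_ornJoin D h₁ h₂,
    fun v => Set.subset_union_left.trans (union_subset_ornJoin_self D v),
    fun v => Set.subset_union_right.trans (union_subset_ornJoin_self D v),
    fun O hO => ornJoin_subset D hO⟩
end

section
/- The set of transitively closed reorientations of tc(D) forms a meet-subsemilattice of the boolean lattice of all reorientations of tc(D) (ordered by inclusion of reversed edge sets) which contains the maximum element, and hence is itself a lattice. -/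
/-- A transitively closed reorientation of `tc(D)`: a set `rev` of reversed edges,
contained in `tc(D)` and transitive. -/
def IsTCReori {V : Type*} (D rev : V → V → Prop) : Prop :=
  (∀ u v, rev u v → Relation.TransGen D u v) ∧ Transitive rev

/-- The transitively closed reorientations of `tc(D)` form a meet-subsemilattice of
the boolean lattice of reorientations of `tc(D)` containing the maximum element
(all edges of `tc(D)` reversed), hence are a lattice (binary joins exist). -/
theorem tcReori_lattice {V : Type*} (D : V → V → Prop) :
    (∀ rev₁ rev₂ : V → V → Prop, IsTCReori D rev₁ → IsTCReori D rev₂ →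
      IsTCReori D (fun u v => rev₁ u v ∧ rev₂ u v)) ∧
    IsTCReori D (Relation.TransGen D) ∧
    (∀ rev : V → V → Prop, IsTCReori D rev → ∀ u v, rev u v → Relation.TransGen D u v) ∧
    (∀ rev₁ rev₂ : V → V → Prop, IsTCReori D rev₁ → IsTCReori D rev₂ →
      ∃ revJ : V → V → Prop, IsTCReori D revJ ∧
        (∀ u v, rev₁ u v → revJ u v) ∧ (∀ u v, rev₂ u v → revJ u v) ∧
        ∀ rev : V → V → Prop, IsTCReori D rev →
          (∀ u v, rev₁ u v → rev u v) → (∀ u v, rev₂ u v → rev u v) →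
          ∀ u v, revJ u v → rev u v) := by
  refine ⟨?_, ?_, ?_, ?_⟩
  · rintro rev₁ rev₂ ⟨h₁, t₁⟩ ⟨h₂, t₂⟩
    exact ⟨fun u v h => h₁ u v h.1,
      fun a b c hab hbc => ⟨t₁ hab.1 hbc.1, t₂ hab.2 hbc.2⟩⟩
  · exact ⟨fun u v h => h, fun a b c => Relation.TransGen.trans⟩
  · exact fun rev h => h.1
  · intro rev₁ rev₂ h₁ h₂
    refine ⟨fun u v => ∀ rev : V → V → Prop, IsTCReori D rev →
        (∀ u v, rev₁ u v → rev u v) → (∀ u v, rev₂ u v → rev u v) → rev u v,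
      ⟨?_, ?_⟩, ?_, ?_, ?_⟩
    · intro u v h
      exact h _ ⟨fun _ _ h => h, fun a b c => Relation.TransGen.trans⟩
        (fun u v => h₁.1 u v) (fun u v => h₂.1 u v)
    · intro a b c hab hbc rev hr hu₁ hu₂
      exact hr.2 (hab rev hr hu₁ hu₂) (hbc rev hr hu₁ hu₂)
    · exact fun u v h rev hr hu₁ _ => hu₁ u v h
    · exact fun u v h rev hr _ hu₂ => hu₂ u v h
    · exact fun rev hr hu₁ hu₂ u v h => h rev hr hu₁ hu₂
end

section
/- The map R ↦ orn_R is a meet-semilattice morphism from the lattice of transitively closed reorientations of tc(D) to the ornamentation lattice Orn(D): for transitively closed reorientations R₁, R₂, we have orn_{R₁ ∧ R₂} = orn_{R₁} ∧ orn_{R₂}, where the meet of reorientations is intersection of reversed edge sets and the meet of ornamentations sends v to the maximal ornament at v contained in orn_{R₁}(v) ∩ orn_{R₂}(v). -/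
/-- The ornamentation `orn_R` associated to a reorientation with reversed edge set `rev`. -/
def ornOfRev {V : Type*} (D rev : V → V → Prop) (v : V) : Set V :=
  maxOrnIn D v {u | Relation.ReflTransGen rev u v}

/-! For transitive relations the reflexive-transitive closure of `rev₁ ∩ rev₂` is the intersection
of the two closures, and an ornament lies in `maxOrnIn D v X` exactly when it lies in `X`. Hence
both sides are the maximal ornament at `v` inside the intersection of the two ancestor sets. -/

namespace Relation

variable {α : Type*} {r s : α → α → Prop} {a b : α}

theorem reflTransGen_iff_eq_or_of_isTrans [IsTrans α r] :
    ReflTransGen r a b ↔ b = a ∨ r a b := by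
  rw [reflTransGen_iff_eq_or_transGen, transGen_eq_self]

theorem reflTransGen_and_iff_of_isTrans [IsTrans α r] [IsTrans α s] :
    ReflTransGen (fun x y => r x y ∧ s x y) a b ↔ ReflTransGen r a b ∧ ReflTransGen s a b := by
  have : IsTrans α (fun x y => r x y ∧ s x y) :=
    ⟨fun _ _ _ h₁ h₂ => ⟨_root_.trans h₁.1 h₂.1, _root_.trans h₁.2 h₂.2⟩⟩
  simp only [reflTransGen_iff_eq_or_of_isTrans, or_and_left]

end Relation

section MaxOrnament

variable {V : Type*} {D : V → V → Prop} {v : V} {X Y U : Set V}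

theorem IsOrnament.subset_maxOrnIn_iff (hU : IsOrnament D v U) :
    U ⊆ maxOrnIn D v X ↔ U ⊆ X :=
  ⟨fun h => h.trans (Set.sUnion_subset fun _ hW => hW.2),
    fun h => Set.subset_sUnion_of_mem ⟨hU, h⟩⟩

theorem maxOrnIn_congr (h : ∀ U, IsOrnament D v U → (U ⊆ X ↔ U ⊆ Y)) :
    maxOrnIn D v X = maxOrnIn D v Y := by
  unfold maxOrnIn
  congr 1
  ext U
  exact and_congr_right (h U)

theorem maxOrnIn_inter_maxOrnIn :
    maxOrnIn D v (maxOrnIn D v X ∩ maxOrnIn D v Y) = maxOrnIn D v (X ∩ Y) :=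
  maxOrnIn_congr fun _ hU => by
    simp only [Set.subset_inter_iff, hU.subset_maxOrnIn_iff]

end MaxOrnament

/-- `R ↦ orn_R` is a meet-semilattice morphism from the lattice of transitively closed
reorientations of `tc(D)` (meet = intersection of reversed edge sets) to the
ornamentation lattice (meet at `v` = maximal ornament at `v` inside the intersection). -/
theorem ornOfRev_meet_morphism {V : Type*} (D rev₁ rev₂ : V → V → Prop)
    (h₁ : IsTCReori D rev₁) (h₂ : IsTCReori D rev₂) :
    ∀ v, ornOfRev D (fun a b => rev₁ a b ∧ rev₂ a b) v =
      maxOrnIn D v (ornOfRev D rev₁ v ∩ ornOfRev D rev₂ v) := by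
  intro v
  have : IsTrans V rev₁ := ⟨fun _ _ _ => @h₁.2 _ _ _⟩
  have : IsTrans V rev₂ := ⟨fun _ _ _ => @h₂.2 _ _ _⟩
  have hancestors : {u | Relation.ReflTransGen (fun a b => rev₁ a b ∧ rev₂ a b) u v} =
      {u | Relation.ReflTransGen rev₁ u v} ∩ {u | Relation.ReflTransGen rev₂ u v} := by
    ext u
    exact Relation.reflTransGen_and_iff_of_isTrans
  rw [ornOfRev, ornOfRev, ornOfRev, maxOrnIn_inter_maxOrnIn, hancestors]
end

section
/- Let D be an increasing directed graph on [n] (all edges (u,v) satisfy u < v), and let S be an acyclic sourcing of the path hypergraph P(D). Then the relation rev(S) = {(u,v) : there is a directed path P ∈ P(D) from u to v with S(P) = v} is transitive. -/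
/-- `IsPathSet D P u v` : `P` is the vertex set of a directed path in `D` from `u` to `v`. -/
inductive IsPathSet {V : Type*} (D : V → V → Prop) : Set V → V → V → Prop
  | single (v : V) : IsPathSet D {v} v v
  | cons {u w v : V} {P : Set V} :
      D u w → IsPathSet D P w v → u ∉ P → IsPathSet D (insert u P) u v

/-- The path hypergraph of `D`: vertex sets of directed paths in `D`. -/
def PathHyp {V : Type*} (D : V → V → Prop) : Set (Set V) :=
  {P | ∃ u v, IsPathSet D P u v}

/-- A sourcing of the path hypergraph of `D`. -/
def IsSourcing {V : Type*} (D : V → V → Prop) (S : Set V → V) : Prop :=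
  ∀ P ∈ PathHyp D, S P ∈ P

/-- An acyclic sourcing of the path hypergraph of `D`: a sourcing with no cyclic
sequence of distinct hyperedges `H₀, …, H_k` with `S (H i) ∈ H (i+1) \ {S (H (i+1))}`
(indices mod `k+1`). -/
def AcyclicSourcing {V : Type*} (D : V → V → Prop) (S : Set V → V) : Prop :=
  IsSourcing D S ∧
    ¬ ∃ (k : ℕ) (H : Fin (k + 1) → Set V),
        (∀ i, H i ∈ PathHyp D) ∧ Function.Injective H ∧
          ∀ i : Fin (k + 1), S (H i) ∈ H (i + 1) ∧ S (H i) ≠ S (H (i + 1))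

/-- `rev(S)`: pairs `(u,v)` such that some directed path `P` from `u` to `v` has `S P = v`. -/
def revOfSourcing {V : Type*} (D : V → V → Prop) (S : Set V → V) : V → V → Prop :=
  fun u v => ∃ P, IsPathSet D P u v ∧ S P = v

section Aux

variable {V : Type*} [LinearOrder V] {D : V → V → Prop}

lemma isPathSet_left_mem {P : Set V} {u v : V} (h : IsPathSet D P u v) : u ∈ P := by
  induction h with
  | single v => exact rfl
  | cons _ _ _ _ => exact Set.mem_insert _ _

lemma isPathSet_right_mem {P : Set V} {u v : V} (h : IsPathSet D P u v) : v ∈ P := by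
  induction h with
  | single v => exact rfl
  | cons _ _ _ ih => exact Set.mem_insert_of_mem _ ih

lemma isPathSet_bounds (hD : ∀ a b, D a b → a < b) {P : Set V} {u v : V}
    (h : IsPathSet D P u v) : ∀ x ∈ P, u ≤ x ∧ x ≤ v := by
  induction h with
  | single v =>
    rintro x rfl
    exact ⟨le_refl _, le_refl _⟩
  | @cons u w v P huw hP hnot ih =>
    intro x hx
    have huw' : u < w := hD _ _ huw
    have hwv : w ≤ v := (ih w (isPathSet_left_mem hP)).2
    rcases hx with rfl | hx
    · exact ⟨le_refl _, le_trans huw'.le hwv⟩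
    · exact ⟨le_trans huw'.le (ih x hx).1, (ih x hx).2⟩

lemma isPathSet_concat (hD : ∀ a b, D a b → a < b) {P Q : Set V} {u v w : V}
    (hP : IsPathSet D P u v) (hQ : IsPathSet D Q v w) : IsPathSet D (P ∪ Q) u w := by
  induction hP with
  | single v =>
    have h : ({v} : Set V) ∪ Q = Q := by
      rw [Set.union_eq_right]
      simpa using isPathSet_left_mem hQ
    rw [h]
    exact hQ
  | @cons u w' v P huw hP' hnot ih =>
    rw [Set.insert_union]
    refine IsPathSet.cons huw (ih hQ) ?_
    rintro (hu | hu)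
    · exact hnot hu
    · have h1 : u < w' := hD _ _ huw
      have h2 : w' ≤ v := (isPathSet_bounds hD hP' w' (isPathSet_left_mem hP')).2
      have h3 : v ≤ u := (isPathSet_bounds hD hQ u hu).1
      exact absurd (lt_of_lt_of_le h1 (le_trans h2 h3)) (lt_irrefl u)

end Aux

/-- For an increasing digraph `D` on `Fin n` and an acyclic sourcing `S` of `P(D)`,
the relation `rev(S)` is transitive. -/
theorem revOfSourcing_transitive {n : ℕ} (D : Fin n → Fin n → Prop)
    (hD : ∀ u v, D u v → u < v) (S : Set (Fin n) → Fin n)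
    (hS : AcyclicSourcing D S) :
    Transitive (revOfSourcing D S) := by
  rintro u v w ⟨P, hP, hSP⟩ ⟨Q, hQ, hSQ⟩
  by_cases hu : u = v
  · exact ⟨Q, hu ▸ hQ, hSQ⟩
  by_cases hv : v = w
  · exact ⟨P, hv ▸ hP, hv ▸ hSP⟩
  have huv : u < v :=
    lt_of_le_of_ne (isPathSet_bounds hD hP u (isPathSet_left_mem hP)).2 hu
  have hvw : v < w :=
    lt_of_le_of_ne (isPathSet_bounds hD hQ v (isPathSet_left_mem hQ)).2 hv
  have hR : IsPathSet D (P ∪ Q) u w := isPathSet_concat hD hP hQ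
  refine ⟨P ∪ Q, hR, ?_⟩
  by_contra hne
  have hRmem : P ∪ Q ∈ PathHyp D := ⟨u, w, hR⟩
  have hQmem : Q ∈ PathHyp D := ⟨v, w, hQ⟩
  have hPmem : P ∈ PathHyp D := ⟨u, v, hP⟩
  have hSR : S (P ∪ Q) ∈ P ∪ Q := hS.1 _ hRmem
  have hwQ : w ∈ Q := isPathSet_right_mem hQ
  have huP : u ∈ P := isPathSet_left_mem hP
  have hvQ : v ∈ Q := isPathSet_left_mem hQ
  have hwnotP : w ∉ P := fun h =>
    absurd (isPathSet_bounds hD hP w h).2 (not_le.2 hvw)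
  have hunotQ : u ∉ Q := fun h =>
    absurd (isPathSet_bounds hD hQ u h).1 (not_le.2 huv)
  have hQR : Q ≠ P ∪ Q := fun h => hunotQ (h ▸ (Or.inl huP : u ∈ P ∪ Q))
  have hPQ : P ≠ Q := fun h => hwnotP (h ▸ hwQ)
  have hPR : P ≠ P ∪ Q := fun h => hwnotP (h ▸ (Or.inr hwQ : w ∈ P ∪ Q))
  have hSRne : S (P ∪ Q) ≠ S Q := by rw [hSQ]; exact hne
  apply hS.2
  by_cases hcase : S (P ∪ Q) ∈ Q
  · -- 2-cycle: Q, P ∪ Q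
    refine ⟨1, ![Q, P ∪ Q], ?_, ?_, ?_⟩
    · intro i
      fin_cases i <;> simpa using (by assumption : _)
    · intro i j hij
      fin_cases i <;> fin_cases j <;>
        simp only [Matrix.cons_val_zero, Matrix.cons_val_one, Matrix.head_cons] at hij <;>
        first
          | rfl
          | exact absurd hij hQR
          | exact absurd hij.symm hQR
    · intro i
      fin_cases i
      · refine ⟨?_, ?_⟩
        · show S Q ∈ P ∪ Q
          rw [hSQ]; exact Or.inr hwQ
        · show S Q ≠ S (P ∪ Q)
          exact fun h => hSRne h.symm
      · refine ⟨?_, ?_⟩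
        · show S (P ∪ Q) ∈ Q
          exact hcase
        · show S (P ∪ Q) ≠ S Q
          exact hSRne
  · -- 3-cycle: P, Q, P ∪ Q
    have hSRP : S (P ∪ Q) ∈ P := hSR.resolve_right hcase
    have hSRnev : S (P ∪ Q) ≠ v := fun h => hcase (h ▸ hvQ)
    refine ⟨2, ![P, Q, P ∪ Q], ?_, ?_, ?_⟩
    · intro i
      fin_cases i <;> simpa using (by assumption : _)
    · intro i j hij
      fin_cases i <;> fin_cases j <;>
        simp only [Matrix.cons_val_zero, Matrix.cons_val_one, Matrix.head_cons,
          Matrix.cons_val_two, Matrix.tail_cons] at hij <;>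
        first
          | rfl
          | exact absurd hij hPQ
          | exact absurd hij.symm hPQ
          | exact absurd hij hPR
          | exact absurd hij.symm hPR
          | exact absurd hij hQR
          | exact absurd hij.symm hQR
    · intro i
      fin_cases i
      · refine ⟨?_, ?_⟩
        · show S P ∈ Q
          rw [hSP]; exact hvQ
        · show S P ≠ S Q
          rw [hSP, hSQ]; exact hvw.ne
      · refine ⟨?_, ?_⟩
        · show S Q ∈ P ∪ Q
          rw [hSQ]; exact Or.inr hwQ
        · show S Q ≠ S (P ∪ Q)
          exact fun h => hSRne h.symm
      · refine ⟨?_, ?_⟩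
        · show S (P ∪ Q) ∈ P
          exact hSRP
        · show S (P ∪ Q) ≠ S P
          rw [hSP]; exact hSRnev
end

section
/- For a directed tree T, the poset of transitively biclosed reorientations of tc(T) (ordered by inclusion of reversed edge sets) is a lattice: the join of two transitively biclosed reorientations R₁, R₂ is the reorientation R with rev(R) equal to the transitive closure of rev(R₁) ∪ rev(R₂), which is itself transitively biclosed. -/
/-!
In an oriented tree the `tc(T)`-interval between two comparable vertices is a chain, since it
is the vertex set of the unique path joining them. Hence, if `u < v < w` and the transitive
closure of `rev₁ ∪ rev₂` contains `(u, w)`, follow a chain of reversed edges from `u` to `w`: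
either it passes through `v`, or one of its edges `(x, c)` jumps over `v`, and coclosedness of
the `revᵢ` containing it puts `(x, v)` or `(v, c)` into a `revᵢ`. So the join is coclosed.
Complementation in `tc(T)` preserves biclosedness and reverses inclusion, which turns the join
into the meet.
-/

/-- A transitively biclosed reorientation of `tc(T)`: a set `rev` of reversed edges
contained in `tc(T)`, transitively closed, and transitively coclosed. -/
def IsBiclosed {V : Type*} (T rev : V → V → Prop) : Prop :=
  (∀ u v, rev u v → Relation.TransGen T u v) ∧
  (∀ u v w, rev u v → rev v w → rev u w) ∧
  (∀ u v w, Relation.TransGen T u v → ¬ rev u v →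
    Relation.TransGen T v w → ¬ rev v w → ¬ rev u w)

open SimpleGraph Relation

theorem Relation.ReflTransGen.and_ne_target {α : Type*} {r : α → α → Prop} {a b : α}
    (h : ReflTransGen r a b) : ReflTransGen (fun x y => r x y ∧ x ≠ b) a b := by
  induction h using ReflTransGen.head_induction_on with
  | refl => exact .refl
  | @head x y hxy _ ih =>
    by_cases hx : x = b
    · rw [hx]
    · exact ih.head ⟨hxy, hx⟩

theorem Relation.transGen_le_of_trans {α : Type*} {r s : α → α → Prop}
    (hs : ∀ u v w, s u v → s v w → s u w) (hrs : ∀ u v, r u v → s u v) :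
    ∀ u v, TransGen r u v → s u v :=
  have : IsTrans α s := ⟨hs⟩
  transGen_minimal hrs

section OrientedTree

variable {V : Type*} {T : V → V → Prop}

theorem fromRel_adj_of_asymm (hasymm : ∀ u v, T u v → ¬ T v u) {a b : V} (h : T a b) :
    (fromRel T).Adj a b :=
  (fromRel_adj T a b).2 ⟨by rintro rfl; exact hasymm a a h h, Or.inl h⟩

theorem not_transGen_self (hacyc : (fromRel T).IsAcyclic) (hasymm : ∀ u v, T u v → ¬ T v u)
    (a : V) : ¬ TransGen T a a := by
  intro ha
  obtain ⟨b, hab, hba⟩ := TransGen.head'_iff.mp ha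
  -- Cut at its first return to `a`, the chain from `b` to `a` avoids the bridge `ab`.
  apply isAcyclic_iff_forall_adj_isBridge.mp hacyc (fromRel_adj_of_asymm hasymm hab)
  refine ((reachable_iff_reflTransGen b a).2 (ReflTransGen.mono ?_ b a hba.and_ne_target)).symm
  rintro x y ⟨hxy, hxa⟩
  refine deleteEdges_adj.2 ⟨fromRel_adj_of_asymm hasymm hxy, fun hedge => ?_⟩
  rcases Sym2.eq_iff.mp (Set.mem_singleton_iff.mp hedge) with ⟨rfl, rfl⟩ | ⟨rfl, rfl⟩
  · exact hxa rfl
  · exact hasymm x y hxy hab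

theorem reflTransGen_antisymm (hacyc : (fromRel T).IsAcyclic) (hasymm : ∀ u v, T u v → ¬ T v u)
    {a b : V} (hab : ReflTransGen T a b) (hba : ReflTransGen T b a) : a = b := by
  rcases reflTransGen_iff_eq_or_transGen.mp hab with h | h
  · exact h.symm
  · exact (not_transGen_self hacyc hasymm a (h.trans_left hba)).elim

theorem exists_isPath_of_reflTransGen (hacyc : (fromRel T).IsAcyclic)
    (hasymm : ∀ u v, T u v → ¬ T v u) {a b : V} (h : ReflTransGen T a b) :
    ∃ p : (fromRel T).Walk a b, p.IsPath ∧
      ∀ c ∈ p.support, ReflTransGen T a c ∧ ReflTransGen T c b := by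
  induction h using ReflTransGen.head_induction_on with
  | refl => exact ⟨.nil, .nil, by simp [ReflTransGen.refl]⟩
  | @head x y hxy hyb ih =>
    obtain ⟨p, hp, hsupp⟩ := ih
    have hx : x ∉ p.support := fun hx =>
      not_transGen_self hacyc hasymm x (TransGen.head' hxy (hsupp x hx).1)
    refine ⟨.cons (fromRel_adj_of_asymm hasymm hxy) p, hp.cons hx, ?_⟩
    simp only [Walk.support_cons, List.mem_cons, forall_eq_or_imp]
    exact ⟨⟨.refl, hyb.head hxy⟩, fun c hc => ⟨(hsupp c hc).1.head hxy, (hsupp c hc).2⟩⟩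

theorem exists_isPath_through (hacyc : (fromRel T).IsAcyclic) (hasymm : ∀ u v, T u v → ¬ T v u)
    {u v w : V} (huv : ReflTransGen T u v) (hvw : ReflTransGen T v w) :
    ∃ p : (fromRel T).Walk u w, p.IsPath ∧ v ∈ p.support ∧
      ∀ c ∈ p.support, ReflTransGen T c v ∨ ReflTransGen T v c := by
  obtain ⟨p, hp, hpsupp⟩ := exists_isPath_of_reflTransGen hacyc hasymm huv
  obtain ⟨q, hq, hqsupp⟩ := exists_isPath_of_reflTransGen hacyc hasymm hvw
  refine ⟨p.append q, ?_, ?_, ?_⟩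
  · rw [Walk.isPath_def, Walk.support_append]
    refine hp.support_nodup.append hq.support_nodup.tail fun c hcp hcq => ?_
    have hcv : c ≠ v := by
      rintro rfl
      exact (List.nodup_cons.mp (q.cons_tail_support ▸ hq.support_nodup)).1 hcq
    exact hcv (reflTransGen_antisymm hacyc hasymm (hpsupp c hcp).2
      (hqsupp c (List.mem_of_mem_tail hcq)).1)
  · exact Walk.support_append p q ▸ List.mem_append_left _ p.end_mem_support
  · intro c hc
    rcases List.mem_append.mp (Walk.support_append p q ▸ hc) with hcp | hcq
    · exact .inl (hpsupp c hcp).2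
    · exact .inr (hqsupp c (List.mem_of_mem_tail hcq)).1

theorem reflTransGen_total_of_between (hacyc : (fromRel T).IsAcyclic)
    (hasymm : ∀ u v, T u v → ¬ T v u) {u v w x : V}
    (huv : ReflTransGen T u v) (hvw : ReflTransGen T v w)
    (hux : ReflTransGen T u x) (hxw : ReflTransGen T x w) :
    ReflTransGen T x v ∨ ReflTransGen T v x := by
  obtain ⟨p, hp, hvp, -⟩ := exists_isPath_through hacyc hasymm huv hvw
  obtain ⟨q, hq, -, hqsupp⟩ := exists_isPath_through hacyc hasymm hux hxw
  have hpq : p = q :=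
    congrArg Subtype.val ((hacyc.subsingleton_path u w).elim ⟨p, hp⟩ ⟨q, hq⟩)
  exact (hqsupp v (hpq ▸ hvp)).symm

end OrientedTree

section Biclosed

variable {V : Type*} {T : V → V → Prop}

theorem IsBiclosed.rev_or_rev {rev : V → V → Prop} (h : IsBiclosed T rev) {u v w : V}
    (huv : TransGen T u v) (hvw : TransGen T v w) (huw : rev u w) : rev u v ∨ rev v w := by
  by_contra hn
  exact h.2.2 u v w huv (fun h' => hn (.inl h')) hvw (fun h' => hn (.inr h')) huw

theorem IsBiclosed.coclosed_transGen_or (hacyc : (fromRel T).IsAcyclic)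
    (hasymm : ∀ u v, T u v → ¬ T v u) {rev₁ rev₂ : V → V → Prop}
    (h₁ : IsBiclosed T rev₁) (h₂ : IsBiclosed T rev₂) {u v w : V}
    (huv : TransGen T u v) (hvw : TransGen T v w)
    (hnuv : ¬ TransGen (fun a b => rev₁ a b ∨ rev₂ a b) u v)
    (hnvw : ¬ TransGen (fun a b => rev₁ a b ∨ rev₂ a b) v w) :
    ¬ TransGen (fun a b => rev₁ a b ∨ rev₂ a b) u w := by
  set R : V → V → Prop := fun a b => rev₁ a b ∨ rev₂ a b
  have hRT : ∀ a b, R a b → TransGen T a b := fun a b h => h.elim (h₁.1 a b) (h₂.1 a b)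
  have hsplit : ∀ {x c}, R x c → TransGen T x v → TransGen T v c → R x v ∨ R v c := by
    rintro x c (h | h) hxv hvc
    · exact (h₁.rev_or_rev hxv hvc h).imp .inl .inl
    · exact (h₂.rev_or_rev hxv hvc h).imp .inr .inr
  -- Follow the chain of reversed edges from `u` to `w` until it reaches or jumps over `v`.
  suffices key : ∀ x, ReflTransGen R x w → TransGen T x v → TransGen R x v from
    fun huw => hnuv (key u huw.to_reflTransGen huv)
  intro x hxw
  induction hxw using ReflTransGen.head_induction_on with
  | refl => exact fun hwv => (not_transGen_self hacyc hasymm w (hwv.trans hvw)).elim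
  | @head x c hxc hcw ih =>
    intro hxv
    have hcw' : ReflTransGen T c w :=
      ReflTransGen.lift' id (fun a b h => (hRT a b h).to_reflTransGen) c w hcw
    rcases reflTransGen_total_of_between hacyc hasymm hxv.to_reflTransGen hvw.to_reflTransGen
      (hRT x c hxc).to_reflTransGen hcw' with hcv | hvc
    · rcases reflTransGen_iff_eq_or_transGen.mp hcv with rfl | hcv
      · exact .single hxc
      · exact .head hxc (ih hcv)
    · rcases reflTransGen_iff_eq_or_transGen.mp hvc with rfl | hvc
      · exact .single hxc
      · exact .single ((hsplit hxc hxv hvc).resolve_right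
          fun hvc' => hnvw ((TransGen.single hvc').trans_left hcw))

theorem IsBiclosed.transGen_or (hacyc : (fromRel T).IsAcyclic)
    (hasymm : ∀ u v, T u v → ¬ T v u) {rev₁ rev₂ : V → V → Prop}
    (h₁ : IsBiclosed T rev₁) (h₂ : IsBiclosed T rev₂) :
    IsBiclosed T (TransGen fun a b => rev₁ a b ∨ rev₂ a b) :=
  ⟨TransGen.closed fun a b h => h.elim (h₁.1 a b) (h₂.1 a b), fun _ _ _ => TransGen.trans,
    fun _ _ _ huv hnuv hvw hnvw => h₁.coclosed_transGen_or hacyc hasymm h₂ huv hvw hnuv hnvw⟩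

def complRev (T rev : V → V → Prop) : V → V → Prop :=
  fun u v => TransGen T u v ∧ ¬ rev u v

theorem IsBiclosed.complRev {rev : V → V → Prop} (h : IsBiclosed T rev) :
    IsBiclosed T (complRev T rev) := by
  obtain ⟨-, htrans, hcotrans⟩ := h
  refine ⟨fun u v h => h.1, ?_, ?_⟩
  · rintro u v w ⟨huv, hnuv⟩ ⟨hvw, hnvw⟩
    exact ⟨huv.trans hvw, hcotrans u v w huv hnuv hvw hnvw⟩
  · rintro u v w huv hnuv hvw hnvw ⟨-, hnuw⟩
    exact hnuw (htrans u v w (not_not.mp fun h => hnuv ⟨huv, h⟩)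
      (not_not.mp fun h => hnvw ⟨hvw, h⟩))

theorem complRev_anti {r s : V → V → Prop} (h : ∀ u v, r u v → s u v) :
    ∀ u v, complRev T s u v → complRev T r u v :=
  fun u v ⟨huv, hns⟩ => ⟨huv, fun hr => hns (h u v hr)⟩

theorem le_of_complRev_le {r s : V → V → Prop} (h : ∀ u v, complRev T r u v → s u v) :
    ∀ u v, complRev T s u v → r u v :=
  fun u v ⟨huv, hns⟩ => not_not.mp fun hnr => hns (h u v ⟨huv, hnr⟩)

theorem le_complRev_of_le_complRev {r s : V → V → Prop} (hr : ∀ u v, r u v → TransGen T u v)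
    (h : ∀ u v, s u v → complRev T r u v) : ∀ u v, r u v → complRev T s u v :=
  fun u v hruv => ⟨hr u v hruv, fun hs => (h u v hs).2 hruv⟩

end Biclosed

theorem biclosed_lattice_general {V : Type*} (T : V → V → Prop)
    (htree : (SimpleGraph.fromRel T).IsTree)
    (hasymm : ∀ u v, T u v → ¬ T v u) :
    (∀ rev₁ rev₂ : V → V → Prop, IsBiclosed T rev₁ → IsBiclosed T rev₂ →
      IsBiclosed T (Relation.TransGen (fun a b => rev₁ a b ∨ rev₂ a b)) ∧
      (∀ u v, rev₁ u v → Relation.TransGen (fun a b => rev₁ a b ∨ rev₂ a b) u v) ∧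
      (∀ u v, rev₂ u v → Relation.TransGen (fun a b => rev₁ a b ∨ rev₂ a b) u v) ∧
      (∀ rev : V → V → Prop, IsBiclosed T rev →
        (∀ u v, rev₁ u v → rev u v) → (∀ u v, rev₂ u v → rev u v) →
        ∀ u v, Relation.TransGen (fun a b => rev₁ a b ∨ rev₂ a b) u v → rev u v)) ∧
    (∀ rev₁ rev₂ : V → V → Prop, IsBiclosed T rev₁ → IsBiclosed T rev₂ →
      ∃ revM : V → V → Prop, IsBiclosed T revM ∧
        (∀ u v, revM u v → rev₁ u v) ∧ (∀ u v, revM u v → rev₂ u v) ∧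
        ∀ rev : V → V → Prop, IsBiclosed T rev →
          (∀ u v, rev u v → rev₁ u v) → (∀ u v, rev u v → rev₂ u v) →
          ∀ u v, rev u v → revM u v) := by
  have hacyc := htree.isAcyclic
  constructor
  · intro rev₁ rev₂ h₁ h₂
    exact ⟨h₁.transGen_or hacyc hasymm h₂, fun _ _ h => .single (.inl h),
      fun _ _ h => .single (.inr h), fun rev hrev hle₁ hle₂ =>
        transGen_le_of_trans hrev.2.1 fun u v h => h.elim (hle₁ u v) (hle₂ u v)⟩
  · intro rev₁ rev₂ h₁ h₂
    set J := TransGen fun a b => complRev T rev₁ a b ∨ complRev T rev₂ a b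
    refine ⟨complRev T J, (h₁.complRev.transGen_or hacyc hasymm h₂.complRev).complRev,
      le_of_complRev_le fun _ _ h => .single (.inl h),
      le_of_complRev_le fun _ _ h => .single (.inr h),
      fun rev hrev hle₁ hle₂ => le_complRev_of_le_complRev hrev.1 ?_⟩
    exact transGen_le_of_trans hrev.complRev.2.1
      fun u v h => h.elim (complRev_anti hle₁ u v) (complRev_anti hle₂ u v)

/-- For a directed tree `T`, the transitively biclosed reorientations of `tc(T)` form a
lattice: the join of two of them is the transitive closure of the union of their
reversed edge sets, which is again transitively biclosed. -/
theorem biclosed_lattice {V : Type*} [Fintype V] (T : V → V → Prop)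
    (htree : (SimpleGraph.fromRel T).IsTree)
    (hirr : ∀ v, ¬ T v v) (hasymm : ∀ u v, T u v → ¬ T v u) :
    (∀ rev₁ rev₂ : V → V → Prop, IsBiclosed T rev₁ → IsBiclosed T rev₂ →
      IsBiclosed T (Relation.TransGen (fun a b => rev₁ a b ∨ rev₂ a b)) ∧
      (∀ u v, rev₁ u v → Relation.TransGen (fun a b => rev₁ a b ∨ rev₂ a b) u v) ∧
      (∀ u v, rev₂ u v → Relation.TransGen (fun a b => rev₁ a b ∨ rev₂ a b) u v) ∧
      (∀ rev : V → V → Prop, IsBiclosed T rev →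
        (∀ u v, rev₁ u v → rev u v) → (∀ u v, rev₂ u v → rev u v) →
        ∀ u v, Relation.TransGen (fun a b => rev₁ a b ∨ rev₂ a b) u v → rev u v)) ∧
    (∀ rev₁ rev₂ : V → V → Prop, IsBiclosed T rev₁ → IsBiclosed T rev₂ →
      ∃ revM : V → V → Prop, IsBiclosed T revM ∧
        (∀ u v, revM u v → rev₁ u v) ∧ (∀ u v, revM u v → rev₂ u v) ∧
        ∀ rev : V → V → Prop, IsBiclosed T rev →
          (∀ u v, rev u v → rev₁ u v) → (∀ u v, rev u v → rev₂ u v) →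
          ∀ u v, rev u v → revM u v) :=
  biclosed_lattice_general T htree hasymm
end
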